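/- Let R be an associative ring with unity and let M be a strongly two-degree Ding projective left R-module, with defining short exact sequence 0 → M → D → M → 0 where D is Ding projective. If 0 → D → P → D₁ → 0 is a short exact sequence with P projective and D₁ Ding projective, and N is the pushout fitting in short exact sequences 0 → M → P → N → 0 and 0 → M → N → D₁ → 0, then Ext^i_R(N, F) = 0 for every integer i ≥ 1 and every flat left R-module F. -/

import Mathlib

universe u

open scoped TensorProduct DirectSum

/-- The subgroup of `E ⊗[ℤ] F` by which one quotients to obtain the balanced tensor
product `E ⊗_R F` of a right `R`-module `E` and a left `R`-module `F`. -/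
def balancedSub (R : Type u) [Ring R] (E F : Type u) [AddCommGroup E] [Module Rᵐᵒᵖ E]
    [AddCommGroup F] [Module R F] : Submodule ℤ (TensorProduct ℤ E F) :=
  Submodule.span ℤ
    {x | ∃ (r : R) (e : E) (f : F),
      x = (MulOpposite.op r • e) ⊗ₜ[ℤ] f - e ⊗ₜ[ℤ] (r • f)}

/-- The tensor product `E ⊗_R F` of a right `R`-module `E` and a left `R`-module `F`
over a possibly noncommutative ring `R`, realized as a quotient of `E ⊗[ℤ] F`. -/
def ModTensor (R : Type u) [Ring R] (E F : Type u) [AddCommGroup E] [Module Rᵐᵒᵖ E]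
    [AddCommGroup F] [Module R F] : Type u :=
  TensorProduct ℤ E F ⧸ balancedSub R E F

noncomputable instance (R : Type u) [Ring R] (E F : Type u) [AddCommGroup E] [Module Rᵐᵒᵖ E]
    [AddCommGroup F] [Module R F] : AddCommGroup (ModTensor R E F) :=
  inferInstanceAs (AddCommGroup (TensorProduct ℤ E F ⧸ balancedSub R E F))

/-- The map `E ⊗_R F → E' ⊗_R F` induced by a map `g : E → E'` of right `R`-modules. -/
noncomputable def ModTensor.mapLeft (R : Type u) [Ring R] {E E' : Type u} [AddCommGroup E]
    [Module Rᵐᵒᵖ E] [AddCommGroup E'] [Module Rᵐᵒᵖ E'] (F : Type u) [AddCommGroup F]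
    [Module R F] (g : E →ₗ[Rᵐᵒᵖ] E') : ModTensor R E F →ₗ[ℤ] ModTensor R E' F :=
  Submodule.mapQ (balancedSub R E F) (balancedSub R E' F)
    (TensorProduct.map (g.restrictScalars ℤ) LinearMap.id)
    (by
      rw [balancedSub, Submodule.span_le]
      rintro x ⟨r, e, f, rfl⟩
      refine Submodule.subset_span ⟨r, g e, f, ?_⟩
      show TensorProduct.map (g.restrictScalars ℤ) LinearMap.id
        ((MulOpposite.op r • e) ⊗ₜ[ℤ] f - e ⊗ₜ[ℤ] (r • f)) = _
      simp [map_sub, TensorProduct.map_tmul, map_smul])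

/-- The map `E ⊗_R F → E ⊗_R F'` induced by a map `f : F → F'` of left `R`-modules. -/
noncomputable def ModTensor.mapRight (R : Type u) [Ring R] (E : Type u) [AddCommGroup E]
    [Module Rᵐᵒᵖ E] {F F' : Type u} [AddCommGroup F] [Module R F] [AddCommGroup F']
    [Module R F'] (f : F →ₗ[R] F') : ModTensor R E F →ₗ[ℤ] ModTensor R E F' :=
  Submodule.mapQ (balancedSub R E F) (balancedSub R E F')
    (TensorProduct.map LinearMap.id (f.restrictScalars ℤ))
    (by
      rw [balancedSub, Submodule.span_le]
      rintro x ⟨r, e, y, rfl⟩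
      refine Submodule.subset_span ⟨r, e, f y, ?_⟩
      show TensorProduct.map LinearMap.id (f.restrictScalars ℤ)
        ((MulOpposite.op r • e) ⊗ₜ[ℤ] y - e ⊗ₜ[ℤ] (r • y)) = _
      simp [map_sub, TensorProduct.map_tmul, map_smul])

/-- A left module `F` over a (possibly noncommutative) ring `R` is flat if tensoring
with `F` preserves injectivity of maps of right `R`-modules. -/
def IsFlatModule (R : Type u) [Ring R] (F : Type u) [AddCommGroup F] [Module R F] : Prop :=
  ∀ (E E' : Type u) [AddCommGroup E] [Module Rᵐᵒᵖ E] [AddCommGroup E'] [Module Rᵐᵒᵖ E']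
    (g : E →ₗ[Rᵐᵒᵖ] E'), Function.Injective g →
      Function.Injective (ModTensor.mapLeft R F g)

/-- `Ext^i_R(M, L) = 0`, expressed using the `Ext` functor on the category of left
`R`-modules (with its `ℤ`-linear structure). -/
def ExtIsZero (R : Type u) [Ring R] (i : ℕ) (M L : Type u) [AddCommGroup M] [Module R M]
    [AddCommGroup L] [Module R L] : Prop :=
  Subsingleton ((((_root_.Ext ℤ (ModuleCat.{u} R) i).obj
    (Opposite.op (ModuleCat.of R M))).obj (ModuleCat.of R L)) : Type u)

/-- `FlatDimLE R n L` means the left `R`-module `L` admits a flat resolution of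
length at most `n`. -/
def FlatDimLE (R : Type u) [Ring R] : ℕ → ModuleCat.{u} R → Prop
  | 0, L => IsFlatModule R L
  | n + 1, L =>
    ∃ (F K : ModuleCat.{u} R) (ι : (K : Type u) →ₗ[R] F) (π : (F : Type u) →ₗ[R] L),
      IsFlatModule R F ∧ Function.Injective ι ∧ Function.Surjective π ∧
      Function.Exact ι π ∧ FlatDimLE R n K

/-- A left `R`-module `L` has finite flat dimension if it admits a finite resolution
by flat modules. -/
def HasFiniteFlatDimension (R : Type u) [Ring R] (L : Type u) [AddCommGroup L]
    [Module R L] : Prop :=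
  ∃ n : ℕ, FlatDimLE R n (ModuleCat.of R L)

/-- A left `R`-module `M` is Ding projective if there is an exact sequence
`⋯ → P₁ → P₀ → P₋₁ → P₋₂ → ⋯` of projective modules with `M ≅ ker (P₀ → P₋₁)`
which stays exact under `Hom_R(-, F)` for every flat module `F`. -/
def IsDingProjective (R : Type u) [Ring R] (M : Type u) [AddCommGroup M] [Module R M] : Prop :=
  ∃ (P : ℤ → ModuleCat.{u} R) (d : ∀ n : ℤ, (P (n + 1) : Type u) →ₗ[R] P n),
    (∀ n, Module.Projective R (P n)) ∧
    (∀ n, Function.Exact (d (n + 1)) (d n)) ∧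
    (∀ (F : Type u) [AddCommGroup F] [Module R F], IsFlatModule R F →
      ∀ n : ℤ, Function.Exact
        (fun g : (P n : Type u) →ₗ[R] F => g ∘ₗ d n)
        (fun g : (P (n + 1) : Type u) →ₗ[R] F => g ∘ₗ d (n + 1))) ∧
    Nonempty (M ≃ₗ[R] LinearMap.ker (d (-1)))

/-- A left `R`-module `M` is two-degree Ding projective if there is an exact sequence
`⋯ → D₁ → D₀ → D₋₁ → D₋₂ → ⋯` of Ding projective modules with `M ≅ ker (D₀ → D₋₁)`
which stays exact under `Hom_R(-, F)` for every flat module `F`. -/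
def IsTwoDegreeDingProjective (R : Type u) [Ring R] (M : Type u) [AddCommGroup M]
    [Module R M] : Prop :=
  ∃ (D : ℤ → ModuleCat.{u} R) (d : ∀ n : ℤ, (D (n + 1) : Type u) →ₗ[R] D n),
    (∀ n, IsDingProjective R (D n)) ∧
    (∀ n, Function.Exact (d (n + 1)) (d n)) ∧
    (∀ (F : Type u) [AddCommGroup F] [Module R F], IsFlatModule R F →
      ∀ n : ℤ, Function.Exact
        (fun g : (D n : Type u) →ₗ[R] F => g ∘ₗ d n)
        (fun g : (D (n + 1) : Type u) →ₗ[R] F => g ∘ₗ d (n + 1))) ∧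
    Nonempty (M ≃ₗ[R] LinearMap.ker (d (-1)))

/-- A left `R`-module `M` is strongly two-degree Ding projective if there is an exact
sequence `⋯ →f D →f D →f D →f ⋯` with `D` Ding projective and a single map `f`, with
`M ≅ ker f`, which stays exact under `Hom_R(-, F)` for every flat module `F`. -/
def IsStronglyTwoDegreeDingProjective (R : Type u) [Ring R] (M : Type u) [AddCommGroup M]
    [Module R M] : Prop :=
  ∃ (D : ModuleCat.{u} R) (f : (D : Type u) →ₗ[R] D),
    IsDingProjective R D ∧
    Function.Exact f f ∧
    (∀ (F : Type u) [AddCommGroup F] [Module R F], IsFlatModule R F →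
      Function.Exact
        (fun g : (D : Type u) →ₗ[R] F => g ∘ₗ f)
        (fun g : (D : Type u) →ₗ[R] F => g ∘ₗ f)) ∧
    Nonempty (M ≃ₗ[R] LinearMap.ker f)

/-- A left `R`-module `M` is Gorenstein projective if there is an exact sequence
`⋯ → P₁ → P₀ → P₋₁ → P₋₂ → ⋯` of projective modules with `M ≅ ker (P₀ → P₋₁)`
which stays exact under `Hom_R(-, Q)` for every projective module `Q`. -/
def IsGorensteinProjective (R : Type u) [Ring R] (M : Type u) [AddCommGroup M]
    [Module R M] : Prop :=
  ∃ (P : ℤ → ModuleCat.{u} R) (d : ∀ n : ℤ, (P (n + 1) : Type u) →ₗ[R] P n),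
    (∀ n, Module.Projective R (P n)) ∧
    (∀ n, Function.Exact (d (n + 1)) (d n)) ∧
    (∀ (Q : Type u) [AddCommGroup Q] [Module R Q], Module.Projective R Q →
      ∀ n : ℤ, Function.Exact
        (fun g : (P n : Type u) →ₗ[R] Q => g ∘ₗ d n)
        (fun g : (P (n + 1) : Type u) →ₗ[R] Q => g ∘ₗ d (n + 1))) ∧
    Nonempty (M ≃ₗ[R] LinearMap.ker (d (-1)))

/-- A left `R`-module `H` is Gorenstein flat if there is an exact sequence
`⋯ → F₁ → F₀ → F₋₁ → F₋₂ → ⋯` of flat modules with `H ≅ ker (F₀ → F₋₁)` which stays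
exact under `E ⊗_R -` for every injective right `R`-module `E`. -/
def IsGorensteinFlat (R : Type u) [Ring R] (H : Type u) [AddCommGroup H] [Module R H] : Prop :=
  ∃ (F : ℤ → ModuleCat.{u} R) (d : ∀ n : ℤ, (F (n + 1) : Type u) →ₗ[R] F n),
    (∀ n, IsFlatModule R (F n)) ∧
    (∀ n, Function.Exact (d (n + 1)) (d n)) ∧
    (∀ (E : Type u) [AddCommGroup E] [Module Rᵐᵒᵖ E], Module.Injective Rᵐᵒᵖ E →
      ∀ n : ℤ, Function.Exact
        (ModTensor.mapRight R E (d (n + 1)))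
        (ModTensor.mapRight R E (d n))) ∧
    Nonempty (H ≃ₗ[R] LinearMap.ker (d (-1)))

/-- A left `R`-module `E` is FP-injective if `Ext¹_R(F, E) = 0` for every finitely
presented module `F`. -/
def IsFPInjective (R : Type u) [Ring R] (E : Type u) [AddCommGroup E] [Module R E] : Prop :=
  ∀ (F : Type u) [AddCommGroup F] [Module R F], Module.FinitePresentation R F →
    ExtIsZero R 1 F E

/-- A left `R`-module `M` is Ding injective if there is an exact sequence
`⋯ → E₁ → E₀ → E₋₁ → E₋₂ → ⋯` of injective modules with `M ≅ ker (E₀ → E₋₁)`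
which stays exact under `Hom_R(H, -)` for every FP-injective module `H`. -/
def IsDingInjective (R : Type u) [Ring R] (M : Type u) [AddCommGroup M] [Module R M] : Prop :=
  ∃ (E : ℤ → ModuleCat.{u} R) (d : ∀ n : ℤ, (E (n + 1) : Type u) →ₗ[R] E n),
    (∀ n, Module.Injective R (E n)) ∧
    (∀ n, Function.Exact (d (n + 1)) (d n)) ∧
    (∀ (H : Type u) [AddCommGroup H] [Module R H], IsFPInjective R H →
      ∀ n : ℤ, Function.Exact
        (fun g : H →ₗ[R] (E (n + 1 + 1) : Type u) => d (n + 1) ∘ₗ g)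
        (fun g : H →ₗ[R] (E (n + 1) : Type u) => d n ∘ₗ g)) ∧
    Nonempty (M ≃ₗ[R] LinearMap.ker (d (-1)))

/-- A left `R`-module `M` is two-degree Ding injective if there is an exact sequence
`⋯ → D₁ → D₀ → D₋₁ → D₋₂ → ⋯` of Ding injective modules with `M ≅ ker (D₀ → D₋₁)`
which stays exact under `Hom_R(H, -)` for every FP-injective module `H`. -/
def IsTwoDegreeDingInjective (R : Type u) [Ring R] (M : Type u) [AddCommGroup M]
    [Module R M] : Prop :=
  ∃ (D : ℤ → ModuleCat.{u} R) (d : ∀ n : ℤ, (D (n + 1) : Type u) →ₗ[R] D n),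
    (∀ n, IsDingInjective R (D n)) ∧
    (∀ n, Function.Exact (d (n + 1)) (d n)) ∧
    (∀ (H : Type u) [AddCommGroup H] [Module R H], IsFPInjective R H →
      ∀ n : ℤ, Function.Exact
        (fun g : H →ₗ[R] (D (n + 1 + 1) : Type u) => d (n + 1) ∘ₗ g)
        (fun g : H →ₗ[R] (D (n + 1) : Type u) => d n ∘ₗ g)) ∧
    Nonempty (M ≃ₗ[R] LinearMap.ker (d (-1)))

/-!
Against a flat module `F` we compute with the derived-category `Ext`, which has long exact
sequences. If `⋯ → Pₙ₊₁ → Pₙ → ⋯` is exact and stays exact under `Hom(-, F)`, and its terms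
satisfy `Ext^{≥1}(-, F) = 0`, then so do its syzygies `K`: along `0 → K' → P → K → 0`,
`Ext¹(K, F) = 0` because every map `K' → F` extends over `P`, and `Ext^{i+1}(K, F) ≅ Ext^i(K', F)`.
Ding projectives are such syzygies (terms projective), and so are strongly two-degree Ding
projectives (the constant complex `⋯ →f D →f D →f ⋯`, terms Ding projective). Finally `N` is an
extension of `D₁` by `M`.
-/

universe w v

open CategoryTheory Abelian

section AbelianCategory

variable {C : Type u} [Category.{v} C] [Abelian C]

namespace CategoryTheory.ProjectiveResolution

variable {X Y : C} (P : ProjectiveResolution X) (n : ℕ)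

lemma subsingleton_Ext_succ_iff (A : Type*) [Ring A] [Linear A C] [EnoughProjectives C] :
    Subsingleton (((_root_.Ext A C (n + 1)).obj (Opposite.op X)).obj Y) ↔
      ∀ f : P.complex.X (n + 1) ⟶ Y, P.complex.d (n + 2) (n + 1) ≫ f = 0 →
        ∃ g : P.complex.X n ⟶ Y, P.complex.d (n + 1) n ≫ g = f := by
  rw [← ModuleCat.isZero_iff_subsingleton, (P.isoExt (n + 1) Y).isZero_iff,
    ← HomologicalComplex.exactAt_iff_isZero_homology,
    HomologicalComplex.exactAt_iff' _ n (n + 1) (n + 2) (by simp) (by simp),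
    ShortComplex.moduleCat_exact_iff]
  rfl

lemma subsingleton_ext_succ_iff [HasExt.{w} C] :
    Subsingleton (Ext X Y (n + 1)) ↔
      ∀ f : P.complex.X (n + 1) ⟶ Y, P.complex.d (n + 2) (n + 1) ≫ f = 0 →
        ∃ g : P.complex.X n ⟶ Y, P.complex.d (n + 1) n ≫ g = f := by
  constructor
  · intro h f hf
    exact (P.extMk_eq_zero_iff f (n + 2) rfl hf n rfl).mp (Subsingleton.elim _ _)
  · intro h
    refine ⟨fun x y => ?_⟩
    suffices ∀ x : Ext X Y (n + 1), x = 0 by rw [this x, this y]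
    intro x
    obtain ⟨f, hf, rfl⟩ := P.extMk_surjective x (n + 2) rfl
    exact (P.extMk_eq_zero_iff f (n + 2) rfl hf n rfl).mpr (h f hf)

end CategoryTheory.ProjectiveResolution

/-- The classical `Ext` (left derived functors of `Hom`) and the derived-category `Ext` are
both computed by the same cocycle condition on a projective resolution. -/
lemma CategoryTheory.subsingleton_Ext_succ_iff_subsingleton_ext (A : Type*) [Ring A]
    [Linear A C] [EnoughProjectives C] [HasExt.{w} C] (X Y : C) (n : ℕ) :
    Subsingleton (((_root_.Ext A C (n + 1)).obj (Opposite.op X)).obj Y) ↔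
      Subsingleton (Ext X Y (n + 1)) := by
  rw [(projectiveResolution X).subsingleton_Ext_succ_iff,
    (projectiveResolution X).subsingleton_ext_succ_iff]

namespace CategoryTheory.ShortComplex.ShortExact

variable [HasExt.{w} C] {S : ShortComplex C} (hS : S.ShortExact) {Y : C} {n : ℕ}
include hS

lemma subsingleton_ext_X₂ (h₁ : Subsingleton (Ext S.X₁ Y n))
    (h₃ : Subsingleton (Ext S.X₃ Y n)) : Subsingleton (Ext S.X₂ Y n) := by
  refine ⟨fun x y => ?_⟩
  suffices ∀ x₂ : Ext S.X₂ Y n, x₂ = 0 by rw [this x, this y]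
  intro x₂
  obtain ⟨x₃, rfl⟩ := Ext.contravariant_sequence_exact₂ hS Y x₂ (Subsingleton.elim _ _)
  rw [Subsingleton.elim x₃ 0, Ext.comp_zero]

/-- The connecting map `Ext^n(X₁, Y) → Ext^(n+1)(X₃, Y)` is onto once `Ext^(n+1)(X₂, Y) = 0`,
and it kills the classes restricted from `X₂`. -/
lemma subsingleton_ext_X₃_succ (h₂ : Subsingleton (Ext S.X₂ Y (n + 1)))
    (h₁ : ∀ x₁ : Ext S.X₁ Y n, ∃ x₂ : Ext S.X₂ Y n, (Ext.mk₀ S.f).comp x₂ (zero_add n) = x₁) :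
    Subsingleton (Ext S.X₃ Y (n + 1)) := by
  refine ⟨fun x y => ?_⟩
  suffices ∀ x₃ : Ext S.X₃ Y (n + 1), x₃ = 0 by rw [this x, this y]
  intro x₃
  obtain ⟨x₁, rfl⟩ := Ext.contravariant_sequence_exact₃ hS Y x₃ (Subsingleton.elim _ _)
    (add_comm 1 n)
  obtain ⟨x₂, rfl⟩ := h₁ x₁
  exact hS.extClass_comp_assoc x₂

end CategoryTheory.ShortComplex.ShortExact

end AbelianCategory

namespace ModuleCat

variable {R : Type u} [Ring R]
variable {K P X Y : Type v} [AddCommGroup K] [Module R K] [AddCommGroup P] [Module R P]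
  [AddCommGroup X] [Module R X] [AddCommGroup Y] [Module R Y]
  {f : K →ₗ[R] P} {g : P →ₗ[R] X}

lemma shortExact_shortComplexOfCompEqZero (hf : Function.Injective f)
    (hg : Function.Surjective g) (hfg : Function.Exact f g) :
    (shortComplexOfCompEqZero f g hfg.linearMap_comp_eq_zero).ShortExact :=
  shortComplex_shortExact _ hfg hf hg

variable [Small.{v} R]
  (hf : Function.Injective f) (hg : Function.Surjective g) (hfg : Function.Exact f g)
include hf hg hfg

lemma subsingleton_ext_middle_of_exact {n : ℕ} (hK : Subsingleton (Ext (of R K) (of R Y) n))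
    (hX : Subsingleton (Ext (of R X) (of R Y) n)) :
    Subsingleton (Ext (of R P) (of R Y) n) :=
  (shortExact_shortComplexOfCompEqZero hf hg hfg).subsingleton_ext_X₂ hK hX

lemma subsingleton_ext_one_of_exact (hP : Subsingleton (Ext (of R P) (of R Y) 1))
    (hext : ∀ φ : K →ₗ[R] Y, ∃ ψ : P →ₗ[R] Y, ψ ∘ₗ f = φ) :
    Subsingleton (Ext (of R X) (of R Y) 1) := by
  refine (shortExact_shortComplexOfCompEqZero hf hg hfg).subsingleton_ext_X₃_succ hP fun x₁ => ?_
  obtain ⟨φ, rfl⟩ := (Ext.mk₀_bijective _ _).2 x₁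
  obtain ⟨ψ, hψ⟩ := hext φ.hom
  refine ⟨Ext.mk₀ (ofHom ψ), ?_⟩
  rw [Ext.mk₀_comp_mk₀]
  congr 1
  ext x
  exact LinearMap.congr_fun hψ x

lemma subsingleton_ext_succ_succ_of_exact {n : ℕ}
    (hP : Subsingleton (Ext (of R P) (of R Y) (n + 2)))
    (hK : Subsingleton (Ext (of R K) (of R Y) (n + 1))) :
    Subsingleton (Ext (of R X) (of R Y) (n + 2)) :=
  (shortExact_shortComplexOfCompEqZero hf hg hfg).subsingleton_ext_X₃_succ hP
    fun x₁ => ⟨0, by rw [Ext.comp_zero, Subsingleton.elim x₁ 0]⟩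

end ModuleCat

section HomExactComplex

open ModuleCat

variable {R : Type u} [Ring R] (P : ℤ → ModuleCat.{v} R)
  (d : ∀ n : ℤ, (P (n + 1) : Type v) →ₗ[R] P n) (hd : ∀ n, Function.Exact (d (n + 1)) (d n))
  {Y : Type v} [AddCommGroup Y] [Module R Y]
  (hY : ∀ n : ℤ, Function.Exact
    (fun g : (P n : Type v) →ₗ[R] Y => g ∘ₗ d n)
    (fun g : (P (n + 1) : Type v) →ₗ[R] Y => g ∘ₗ d (n + 1)))

noncomputable def kerCodRestrict (n : ℤ) : (P (n + 1 + 1) : Type v) →ₗ[R] LinearMap.ker (d n) :=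
  (d (n + 1)).codRestrict (LinearMap.ker (d n)) fun y => (hd n).apply_apply_eq_zero y

lemma surjective_kerCodRestrict (n : ℤ) : Function.Surjective (kerCodRestrict P d hd n) :=
  fun ⟨x, hx⟩ => by
    obtain ⟨y, rfl⟩ := (hd n x).mp hx
    exact ⟨y, rfl⟩

lemma exact_subtype_kerCodRestrict (n : ℤ) :
    Function.Exact (LinearMap.ker (d (n + 1))).subtype (kerCodRestrict P d hd n) :=
  fun y => ⟨fun h => ⟨⟨y, congrArg Subtype.val h⟩, rfl⟩, by
    rintro ⟨⟨y, hy⟩, rfl⟩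
    exact Subtype.ext hy⟩

include hd hY in
lemma exists_comp_subtype_ker_eq (n : ℤ) (φ : LinearMap.ker (d n) →ₗ[R] Y) :
    ∃ ψ : (P (n + 1) : Type v) →ₗ[R] Y, ψ ∘ₗ (LinearMap.ker (d n)).subtype = φ := by
  have hc : (φ ∘ₗ kerCodRestrict P d hd n) ∘ₗ d (n + 1 + 1) = 0 := by
    ext z
    show φ (kerCodRestrict P d hd n _) = 0
    rw [show kerCodRestrict P d hd n _ = 0 from Subtype.ext ((hd (n + 1)).apply_apply_eq_zero z),
      map_zero]
  obtain ⟨ψ, hψ⟩ := (hY (n + 1) (φ ∘ₗ kerCodRestrict P d hd n)).mp hc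
  refine ⟨ψ, LinearMap.ext fun ⟨x, hx⟩ => ?_⟩
  obtain ⟨y, rfl⟩ := (hd n x).mp hx
  exact LinearMap.congr_fun hψ y

variable [Small.{v} R]

include hd hY in
lemma subsingleton_ext_of_equiv_ker
    (hP : ∀ n i, Subsingleton (Ext (P n) (of R Y) (i + 1))) (i : ℕ) (n : ℤ) {X : Type v}
    [AddCommGroup X] [Module R X] (e : X ≃ₗ[R] LinearMap.ker (d n)) :
    Subsingleton (Ext (of R X) (of R Y) (i + 1)) := by
  induction i generalizing n X with
  | zero =>
    exact subsingleton_ext_one_of_exact (g := e.symm.toLinearMap ∘ₗ kerCodRestrict P d hd n)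
      Subtype.val_injective (e.symm.surjective.comp (surjective_kerCodRestrict P d hd n))
      (LinearEquiv.postcomp_exact_iff_exact.mpr (exact_subtype_kerCodRestrict P d hd n))
      (hP _ 0) (exists_comp_subtype_ker_eq P d hd hY (n + 1))
  | succ i ih =>
    exact subsingleton_ext_succ_succ_of_exact (g := e.symm.toLinearMap ∘ₗ kerCodRestrict P d hd n)
      Subtype.val_injective (e.symm.surjective.comp (surjective_kerCodRestrict P d hd n))
      (LinearEquiv.postcomp_exact_iff_exact.mpr (exact_subtype_kerCodRestrict P d hd n))
      (hP _ (i + 1)) (ih (n + 1) (LinearEquiv.refl _ _))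

end HomExactComplex

section DingProjective

open ModuleCat

variable {R : Type u} [Ring R] {F : Type u} [AddCommGroup F] [Module R F]

lemma IsDingProjective.subsingleton_ext {D : Type u} [AddCommGroup D] [Module R D]
    (hD : IsDingProjective R D) (hF : IsFlatModule R F) (i : ℕ) :
    Subsingleton (Ext (of R D) (of R F) (i + 1)) := by
  obtain ⟨P, d, hP, hd, hPF, ⟨e⟩⟩ := hD
  refine subsingleton_ext_of_equiv_ker P d hd (hPF F hF) (fun n i => ?_) i (-1) e
  have := (IsProjective.iff_projective (P n)).mp (hP n)
  exact Ext.subsingleton_of_projective _ _ i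

lemma IsTwoDegreeDingProjective.subsingleton_ext {M : Type u} [AddCommGroup M] [Module R M]
    (hM : IsTwoDegreeDingProjective R M) (hF : IsFlatModule R F) (i : ℕ) :
    Subsingleton (Ext (of R M) (of R F) (i + 1)) := by
  obtain ⟨D, d, hD, hd, hDF, ⟨e⟩⟩ := hM
  exact subsingleton_ext_of_equiv_ker D d hd (hDF F hF) (fun n => (hD n).subsingleton_ext hF) i
    (-1) e

lemma IsStronglyTwoDegreeDingProjective.isTwoDegreeDingProjective {M : Type u} [AddCommGroup M]
    [Module R M] (hM : IsStronglyTwoDegreeDingProjective R M) :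
    IsTwoDegreeDingProjective R M := by
  obtain ⟨D, f, hD, hf, hDF, he⟩ := hM
  exact ⟨fun _ => D, fun _ => f, fun _ => hD, fun _ => hf, fun F _ _ hF _ => hDF F hF, he⟩

end DingProjective

theorem pushout_ext_vanishing_general (R : Type u) [Ring R]
    (M D₁ N : Type u) [AddCommGroup M] [Module R M]
    [AddCommGroup D₁] [Module R D₁]
    [AddCommGroup N] [Module R N]
    (hM : IsStronglyTwoDegreeDingProjective R M)
    (hD₁ : IsDingProjective R D₁)
    -- the pushout `N`, fitting in `0 → M → P → N → 0` and `0 → M → N → D₁ → 0`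
    (γ : M →ₗ[R] N) (δ : N →ₗ[R] D₁)
    (hγ : Function.Injective γ) (hδ : Function.Surjective δ) (hγδ : Function.Exact γ δ) :
    ∀ (i : ℕ), 1 ≤ i → ∀ (F : Type u) [AddCommGroup F] [Module R F],
      IsFlatModule R F → ExtIsZero R i N F := by
  intro i hi F _ _ hF
  obtain ⟨k, rfl⟩ := Nat.exists_eq_add_of_le' hi
  exact (subsingleton_Ext_succ_iff_subsingleton_ext ℤ _ _ k).mpr
    (ModuleCat.subsingleton_ext_middle_of_exact hγ hδ hγδ
      (hM.isTwoDegreeDingProjective.subsingleton_ext hF k) (hD₁.subsingleton_ext hF k))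

/-- Let `M` be strongly two-degree Ding projective with defining short
exact sequence `0 → M → D → M → 0`, `D` Ding projective. If `0 → D → P → D₁ → 0` is
exact with `P` projective and `D₁` Ding projective, and `N` is the pushout fitting in
short exact sequences `0 → M → P → N → 0` and `0 → M → N → D₁ → 0`, then
`Ext^i_R(N, F) = 0` for every `i ≥ 1` and every flat module `F`. -/
theorem pushout_ext_vanishing (R : Type u) [Ring R]
    (M D P D₁ N : Type u) [AddCommGroup M] [Module R M] [AddCommGroup D] [Module R D]
    [AddCommGroup P] [Module R P] [AddCommGroup D₁] [Module R D₁]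
    [AddCommGroup N] [Module R N]
    (hM : IsStronglyTwoDegreeDingProjective R M)
    -- the defining short exact sequence `0 → M → D → M → 0` with `D` Ding projective
    (ι : M →ₗ[R] D) (π : D →ₗ[R] M)
    (hι : Function.Injective ι) (hπ : Function.Surjective π) (hιπ : Function.Exact ι π)
    (hD : IsDingProjective R D)
    -- the short exact sequence `0 → D → P → D₁ → 0`
    (j : D →ₗ[R] P) (q : P →ₗ[R] D₁)
    (hj : Function.Injective j) (hq : Function.Surjective q) (hjq : Function.Exact j q)
    (hP : Module.Projective R P) (hD₁ : IsDingProjective R D₁)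
    -- the pushout `N`, fitting in `0 → M → P → N → 0` and `0 → M → N → D₁ → 0`
    (α : M →ₗ[R] P) (β : P →ₗ[R] N)
    (hα : Function.Injective α) (hβ : Function.Surjective β) (hαβ : Function.Exact α β)
    (γ : M →ₗ[R] N) (δ : N →ₗ[R] D₁)
    (hγ : Function.Injective γ) (hδ : Function.Surjective δ) (hγδ : Function.Exact γ δ)
    (hcomm₁ : α = j ∘ₗ ι) (hcomm₂ : β ∘ₗ j = γ ∘ₗ π) (hcomm₃ : δ ∘ₗ β = q) :
    ∀ (i : ℕ), 1 ≤ i → ∀ (F : Type u) [AddCommGroup F] [Module R F],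
      IsFlatModule R F → ExtIsZero R i N F :=
  pushout_ext_vanishing_general R M D₁ N hM hD₁ γ δ hγ hδ hγδ
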